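/- Let A, B be 2×2 complex matrices with |det A| = |det B| = 1, and let w₁, w₂, w₃ be unit vectors in ℂ². Then |w₁ ∧ A w₂| ≤ |w₁ ∧ A w₃| + √2 · ‖A⁻¹‖ · |w₂ ∧ w₃|, where u ∧ v denotes the determinant of the 2×2 matrix with columns u and v, and ‖·‖ is the operator norm. -/

import Mathlib

/-! Multiply `w₃` by a unimodular `e` with `e ⟪w₂, w₃⟫ = ‖⟪w₂, w₃⟫‖`. Then
`‖w₂ - e w₃‖² = 2 - 2 ‖⟪w₂, w₃⟫‖ ≤ 2 (1 - ‖⟪w₂, w₃⟫‖²) = 2 ‖w₂ ∧ w₃‖²` by Lagrange's identity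
`‖u ∧ v‖² + ‖⟪u, v⟫‖² = ‖u‖² ‖v‖²`. Splitting `A w₂ = e A w₃ + A (w₂ - e w₃)`, the remainder is
controlled through `w₁ ∧ A d = det A · (A⁻¹ w₁ ∧ d)` and `‖A⁻¹ w₁ ∧ d‖ ≤ ‖A⁻¹‖ ‖d‖`. -/

/-- The wedge (2×2 determinant) of two vectors in ℂ². -/
noncomputable def wedge (u v : Fin 2 → ℂ) : ℂ := u 0 * v 1 - u 1 * v 0

/-- Operator norm of a 2×2 complex matrix w.r.t. the Euclidean norm on ℂ². -/
noncomputable def opNorm (A : Matrix (Fin 2) (Fin 2) ℂ) : ℝ :=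
  ‖Matrix.toEuclideanCLM (𝕜 := ℂ) A‖

open scoped InnerProductSpace Matrix

lemma exists_norm_eq_one_norm_sub_smul_sq {𝕜 E : Type*} [RCLike 𝕜] [NormedAddCommGroup E]
    [InnerProductSpace 𝕜 E] (v w : E) :
    ∃ e : 𝕜, ‖e‖ = 1 ∧ ‖v - e • w‖ ^ 2 = ‖v‖ ^ 2 + ‖w‖ ^ 2 - 2 * ‖⟪v, w⟫_𝕜‖ := by
  obtain ⟨e, he, hphase⟩ := RCLike.exists_norm_eq_mul_self ⟪v, w⟫_𝕜
  refine ⟨e, he, ?_⟩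
  rw [norm_sub_sq (𝕜 := 𝕜), inner_smul_right, ← hphase, RCLike.ofReal_re, norm_smul, he, one_mul]
  ring

lemma wedge_sub_right (u v w : Fin 2 → ℂ) : wedge u (v - w) = wedge u v - wedge u w := by
  simp only [wedge, Pi.sub_apply]; ring

lemma wedge_smul_right (u v : Fin 2 → ℂ) (c : ℂ) : wedge u (c • v) = c * wedge u v := by
  simp only [wedge, Pi.smul_apply, smul_eq_mul]; ring

lemma wedge_mulVec_mulVec (A : Matrix (Fin 2) (Fin 2) ℂ) (u v : Fin 2 → ℂ) :
    wedge (A *ᵥ u) (A *ᵥ v) = A.det * wedge u v := by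
  simp only [wedge, Matrix.mulVec, dotProduct, Fin.sum_univ_two, Matrix.det_fin_two]
  ring

lemma wedge_mulVec_right {A : Matrix (Fin 2) (Fin 2) ℂ} (hA : IsUnit A.det) (u v : Fin 2 → ℂ) :
    wedge u (A *ᵥ v) = A.det * wedge (A⁻¹ *ᵥ u) v := by
  rw [← wedge_mulVec_mulVec, Matrix.mulVec_mulVec, Matrix.mul_nonsing_inv A hA,
    Matrix.one_mulVec]

lemma sq_norm_wedge_add_sq_norm_inner (u v : EuclideanSpace ℂ (Fin 2)) :
    ‖wedge u v‖ ^ 2 + ‖⟪u, v⟫_ℂ‖ ^ 2 = ‖u‖ ^ 2 * ‖v‖ ^ 2 := by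
  simp only [EuclideanSpace.norm_sq_eq, PiLp.inner_apply, Fin.sum_univ_two, wedge,
    RCLike.inner_apply, ← Complex.normSq_eq_norm_sq, Complex.normSq_apply, Complex.sub_re,
    Complex.sub_im, Complex.mul_re, Complex.mul_im, Complex.add_re, Complex.add_im,
    Complex.conj_re, Complex.conj_im]
  ring

lemma norm_wedge_le (u v : EuclideanSpace ℂ (Fin 2)) : ‖wedge u v‖ ≤ ‖u‖ * ‖v‖ := by
  refine le_of_pow_le_pow_left₀ two_ne_zero (by positivity) ?_
  rw [mul_pow, ← sq_norm_wedge_add_sq_norm_inner u v]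
  exact le_add_of_nonneg_right (sq_nonneg _)

lemma exists_norm_eq_one_norm_sub_smul_le_sqrt_two_mul {v w : EuclideanSpace ℂ (Fin 2)}
    (hv : ‖v‖ = 1) (hw : ‖w‖ = 1) :
    ∃ e : ℂ, ‖e‖ = 1 ∧ ‖v - e • w‖ ≤ √2 * ‖wedge v w‖ := by
  obtain ⟨e, he, hsq⟩ := exists_norm_eq_one_norm_sub_smul_sq (𝕜 := ℂ) v w
  refine ⟨e, he, le_of_pow_le_pow_left₀ two_ne_zero (by positivity) ?_⟩
  have hlagrange := sq_norm_wedge_add_sq_norm_inner v w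
  have hinner : ‖⟪v, w⟫_ℂ‖ ≤ 1 := by simpa [hv, hw] using norm_inner_le_norm (𝕜 := ℂ) v w
  rw [hv, hw] at hlagrange
  rw [hsq, mul_pow, Real.sq_sqrt zero_le_two, hv, hw]
  -- `2 - 2 t ≤ 2 (1 - t²)` for `t = ‖⟪v, w⟫‖ ∈ [0, 1]`
  nlinarith [norm_nonneg ⟪v, w⟫_ℂ]

lemma opNorm_nonneg (A : Matrix (Fin 2) (Fin 2) ℂ) : 0 ≤ opNorm A := norm_nonneg _

lemma norm_toLp_mulVec_le (A : Matrix (Fin 2) (Fin 2) ℂ) (u : EuclideanSpace ℂ (Fin 2)) :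
    ‖WithLp.toLp 2 (A *ᵥ u)‖ ≤ opNorm A * ‖u‖ := by
  rw [← Matrix.toEuclideanCLM_toLp]
  exact (Matrix.toEuclideanCLM (𝕜 := ℂ) A).le_opNorm u

lemma norm_wedge_mulVec_right_le {A : Matrix (Fin 2) (Fin 2) ℂ} (hA : IsUnit A.det)
    (u v : EuclideanSpace ℂ (Fin 2)) :
    ‖wedge u (A *ᵥ v)‖ ≤ ‖A.det‖ * opNorm A⁻¹ * ‖u‖ * ‖v‖ := by
  rw [wedge_mulVec_right hA, norm_mul, mul_assoc, mul_assoc, ← mul_assoc (opNorm A⁻¹)]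
  gcongr
  calc ‖wedge (A⁻¹ *ᵥ u) v‖ ≤ ‖WithLp.toLp 2 (A⁻¹ *ᵥ u)‖ * ‖v‖ :=
        norm_wedge_le (WithLp.toLp 2 (A⁻¹ *ᵥ u)) v
    _ ≤ opNorm A⁻¹ * ‖u‖ * ‖v‖ :=
        mul_le_mul_of_nonneg_right (norm_toLp_mulVec_le _ u) (norm_nonneg v)

theorem stmt0_general (A : Matrix (Fin 2) (Fin 2) ℂ)
    (hA : ‖A.det‖ = 1)
    (w₁ w₂ w₃ : EuclideanSpace ℂ (Fin 2))
    (h₁ : ‖w₁‖ = 1) (h₂ : ‖w₂‖ = 1) (h₃ : ‖w₃‖ = 1) :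
    ‖wedge w₁ (A.mulVec w₂)‖ ≤
      ‖wedge w₁ (A.mulVec w₃)‖ +
        Real.sqrt 2 * opNorm A⁻¹ * ‖wedge w₂ w₃‖ := by
  have hdet : IsUnit A.det := isUnit_iff_ne_zero.2 (norm_ne_zero_iff.1 (hA ▸ one_ne_zero))
  obtain ⟨e, he, hd⟩ := exists_norm_eq_one_norm_sub_smul_le_sqrt_two_mul h₂ h₃
  have hsplit : wedge w₁ (A *ᵥ w₂) =
      e * wedge w₁ (A *ᵥ w₃) + wedge w₁ (A *ᵥ (w₂ - e • w₃ : EuclideanSpace ℂ (Fin 2))) := by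
    rw [WithLp.ofLp_sub, WithLp.ofLp_smul, Matrix.mulVec_sub, Matrix.mulVec_smul,
      wedge_sub_right, wedge_smul_right]
    ring
  calc ‖wedge w₁ (A *ᵥ w₂)‖
      ≤ ‖wedge w₁ (A *ᵥ w₃)‖ + opNorm A⁻¹ * ‖w₂ - e • w₃‖ := by
        rw [hsplit]
        refine (norm_add_le _ _).trans ?_
        rw [norm_mul, he, one_mul]
        gcongr
        simpa only [hA, h₁, one_mul, mul_one] using norm_wedge_mulVec_right_le hdet w₁ _
    _ ≤ ‖wedge w₁ (A *ᵥ w₃)‖ + opNorm A⁻¹ * (√2 * ‖wedge w₂ w₃‖) := by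
        gcongr
        exact opNorm_nonneg _
    _ = ‖wedge w₁ (A *ᵥ w₃)‖ + √2 * opNorm A⁻¹ * ‖wedge w₂ w₃‖ := by ring

theorem stmt0 (A B : Matrix (Fin 2) (Fin 2) ℂ)
    (hA : ‖A.det‖ = 1) (hB : ‖B.det‖ = 1)
    (w₁ w₂ w₃ : EuclideanSpace ℂ (Fin 2))
    (h₁ : ‖w₁‖ = 1) (h₂ : ‖w₂‖ = 1) (h₃ : ‖w₃‖ = 1) :
    ‖wedge w₁ (A.mulVec w₂)‖ ≤
      ‖wedge w₁ (A.mulVec w₃)‖ +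
        Real.sqrt 2 * opNorm A⁻¹ * ‖wedge w₂ w₃‖ :=
  stmt0_general A hA w₁ w₂ w₃ h₁ h₂ h₃
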